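/- arXiv:math/0309190 — 2 statements merged into one kernel-verified Lean document; each statement's English description precedes it below -/
import Mathlib

section
/- Let (a_n)_{n≥1} be integers such that for every prime p, every n coprime to p, and every α ≥ 1, a_{n·p^α} ≡ a_{n·p^{α-1}} (mod p^α). Then for every n ≥ 1, n divides Σ_{d|n} μ(n/d)·a_d. -/
/-!
Localize at one prime `p` at a time. Writing `n = m * p ^ α` with `p ∤ m`, the divisors of `n`
are the products `e * p ^ i` with `e ∣ m` and `i ≤ α`, and Möbius inversion splits accordingly.
Since `μ (p ^ j)` vanishes for `j ≥ 2`, the inner sum over `i` collapses to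
`a (e * p ^ α) - a (e * p ^ (α - 1))`, which the hypothesis makes divisible by `p ^ α`.
-/

open Finset ArithmeticFunction
open scoped ArithmeticFunction.Moebius

theorem Nat.Coprime.sum_divisors_mul_eq_sum_sum {M : Type*} [AddCommMonoid M] {m n : ℕ}
    (hmn : m.Coprime n) (f : ℕ → M) :
    ∑ d ∈ (m * n).divisors, f d = ∑ d₁ ∈ m.divisors, ∑ d₂ ∈ n.divisors, f (d₁ * d₂) := by
  rw [Nat.divisors_mul, ← image_mul_product, sum_image hmn.mul_injOn_divisors, sum_product]

theorem sum_range_moebius_prime_pow_sub_mul {p α : ℕ} (hp : p.Prime) (hα : 1 ≤ α) (f : ℕ → ℤ) :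
    ∑ i ∈ range (α + 1), μ (p ^ (α - i)) * f i = f α - f (α - 1) := by
  obtain ⟨k, rfl⟩ : ∃ k, α = k + 1 := ⟨α - 1, by omega⟩
  have hvanish : ∀ i ∈ range k, μ (p ^ (k + 1 - i)) * f i = 0 := fun i hi => by
    have hi : i < k := mem_range.mp hi
    rw [moebius_apply_prime_pow hp (by omega), if_neg (by omega), zero_mul]
  rw [sum_range_succ, sum_range_succ, sum_eq_zero hvanish, Nat.sub_self, Nat.add_sub_cancel_left,
    pow_zero, pow_one, moebius_apply_one, moebius_apply_prime hp, Nat.add_sub_cancel]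
  ring

section

variable (a : ℕ → ℤ)
  (hcong : ∀ p n α : ℕ, p.Prime → 0 < n → Nat.Coprime p n → 1 ≤ α →
    (p : ℤ) ^ α ∣ a (n * p ^ α) - a (n * p ^ (α - 1)))
include hcong

theorem prime_pow_dvd_sum_moebius_mul {p m α : ℕ} (hp : p.Prime) (hpm : p.Coprime m)
    (hα : 1 ≤ α) :
    (p : ℤ) ^ α ∣ ∑ d ∈ (m * p ^ α).divisors, μ (m * p ^ α / d) * a d := by
  rw [(hpm.symm.pow_right α).sum_divisors_mul_eq_sum_sum]
  refine dvd_sum fun e he => ?_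
  have hem : e ∣ m := Nat.dvd_of_mem_divisors he
  have hpe : p.Coprime e := hpm.coprime_dvd_right hem
  have hsplit : ∀ i ∈ range (α + 1), μ (m * p ^ α / (e * p ^ i)) * a (e * p ^ i)
      = μ (m / e) * (μ (p ^ (α - i)) * a (e * p ^ i)) := fun i hi => by
    have hi : i ≤ α := Nat.lt_succ_iff.mp (mem_range.mp hi)
    rw [Nat.mul_div_mul_comm hem (pow_dvd_pow p hi), Nat.pow_div hi hp.pos,
      isMultiplicative_moebius.map_mul_of_coprime
        ((hpm.coprime_dvd_right (Nat.div_dvd_of_dvd hem)).symm.pow_right _), mul_assoc]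
  rw [Nat.sum_divisors_prime_pow hp, sum_congr rfl hsplit, ← mul_sum,
    sum_range_moebius_prime_pow_sub_mul hp hα]
  exact dvd_mul_of_dvd_right (hcong p e α hp (Nat.pos_of_mem_divisors he) hpe hα) _

theorem ordProj_dvd_sum_moebius_mul {p n : ℕ} (hp : p.Prime) (hn : n ≠ 0) :
    (ordProj[p] n : ℤ) ∣ ∑ d ∈ n.divisors, μ (n / d) * a d := by
  rcases Nat.eq_zero_or_pos (n.factorization p) with hα | hα
  · simp [hα]
  conv_rhs => rw [← Nat.ordProj_mul_ordCompl_eq_self n p, mul_comm]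
  exact_mod_cast prime_pow_dvd_sum_moebius_mul a hcong hp (Nat.coprime_ordCompl hp hn) hα

end

theorem Int.natCast_dvd_of_forall_ordProj_dvd {n : ℕ} {x : ℤ} (hn : n ≠ 0)
    (h : ∀ p, p.Prime → (ordProj[p] n : ℤ) ∣ x) : (n : ℤ) ∣ x := by
  rw [Int.natCast_dvd, Nat.dvd_iff_prime_pow_dvd_dvd]
  intro p k hp hpk
  exact ((hp.pow_dvd_iff_dvd_ordProj hn).1 hpk).trans (Int.natCast_dvd.1 (h p hp))

theorem stmt_6 (a : ℕ → ℤ)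
    (hcong : ∀ p n α : ℕ, p.Prime → 0 < n → Nat.Coprime p n → 1 ≤ α →
      (p : ℤ) ^ α ∣ a (n * p ^ α) - a (n * p ^ (α - 1))) :
    ∀ n : ℕ, 1 ≤ n → (n : ℤ) ∣ ∑ d ∈ n.divisors, moebius (n / d) * a d := by
  intro n hn
  exact Int.natCast_dvd_of_forall_ordProj_dvd (by omega) fun p hp =>
    ordProj_dvd_sum_moebius_mul a hcong hp (by omega)
end

section
/- Define λ_n by λ_0 = 1 and (n+1)·λ_{n+1} = Σ_{k=0}^n 2^{4k+1}·|E_{2k+2}|·λ_{n-k} for n ≥ 0, where E_m are the Euler numbers. Then every λ_n is an integer. -/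
open Finset ArithmeticFunction

/-- The power series of `cosh x = ∑ x^{2k}/(2k)!` over `ℚ`. -/
noncomputable def coshSeries : PowerSeries ℚ :=
  PowerSeries.mk fun n => if Even n then ((n.factorial : ℚ))⁻¹ else 0

/-- The Euler numbers, defined by `1 / cosh x = ∑ Eₙ xⁿ / n!`. -/
noncomputable def eulerNumber (n : ℕ) : ℚ :=
  (n.factorial : ℚ) * PowerSeries.coeff n coshSeries⁻¹

/-!
With `c m = 2 ^ (4m - 3) |E₂ₘ|` the recurrence says `∑ λₙ xⁿ = exp (∑ cₘ xᵐ / m)`. Such an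
exponential has integer coefficients as soon as `c` satisfies the Gauss congruences
`c (p m) ≡ c m [mod p ^ v_p(p m)]`: then `d` divides `∑_{e ∣ d} μ(e) c(d / e) =: d β_d`, and the
series is `∏_d (1 - x ^ d) ^ (-β_d)`, as one checks on logarithmic derivatives.

For `c` the Gauss congruences come from the Kummer congruences for Euler numbers, which follow
from `Eₙ ≡ ∑_{j<q} (-1)^j (2j+1)ⁿ [mod q]` for odd `q` (compare coefficients in
`2 ∑_{j<q} (-1)^j e^{(2j+1)x} = (1 + e^{2qx}) / cosh x`), together with the sign
`(-1)^m E₂ₘ > 0`, an alternating-series estimate on the coefficients of `sec`.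
-/

open PowerSeries
open scoped Nat

section LogDeriv

variable {R A : Type*} [CommRing R] [CommRing A] [Algebra R A]

def HasLogDeriv (D : Derivation R A A) (f r : A) : Prop := D f = r * f

variable {D : Derivation R A A} {f g r s : A}

lemma HasLogDeriv.mul (hf : HasLogDeriv D f r) (hg : HasLogDeriv D g s) :
    HasLogDeriv D (f * g) (r + s) := by
  rw [HasLogDeriv, Derivation.leibniz, hf, hg, smul_eq_mul, smul_eq_mul]
  ring

lemma HasLogDeriv.pow (hf : HasLogDeriv D f r) (n : ℕ) : HasLogDeriv D (f ^ n) (n * r) := by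
  induction n with
  | zero => simp [HasLogDeriv]
  | succ n ih => simpa [pow_succ, add_mul] using ih.mul hf

lemma HasLogDeriv.of_mul_eq_one (hf : HasLogDeriv D f r) (hfg : f * g = 1) :
    HasLogDeriv D g (-r) := by
  have h := congrArg D hfg
  rw [Derivation.leibniz, Derivation.map_one_eq_zero, hf, smul_eq_mul, smul_eq_mul] at h
  rw [HasLogDeriv]
  linear_combination g * h - (D g + r * g) * hfg

lemma HasLogDeriv.prod {ι : Type*} (s : Finset ι) {f r : ι → A}
    (h : ∀ i ∈ s, HasLogDeriv D (f i) (r i)) :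
    HasLogDeriv D (∏ i ∈ s, f i) (∑ i ∈ s, r i) := by
  classical
  induction s using Finset.induction_on with
  | empty => simp [HasLogDeriv]
  | insert a s ha ih =>
    rw [prod_insert ha, sum_insert ha]
    exact (h a (mem_insert_self a s)).mul
      (ih fun i hi => h i (mem_insert_of_mem hi))

end LogDeriv

section GeomSeries

variable {R : Type*} [CommRing R]

variable (R) in
noncomputable def xDeriv : Derivation R R⟦X⟧ R⟦X⟧ := (X : R⟦X⟧) • d⁄dX R

lemma coeff_xDeriv (f : R⟦X⟧) (n : ℕ) : coeff n (xDeriv R f) = n * coeff n f := by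
  rw [xDeriv, Derivation.smul_apply, smul_eq_mul]
  cases n with
  | zero => simp
  | succ n => rw [coeff_succ_X_mul, coeff_derivative, mul_comm]; push_cast; rfl

lemma xDeriv_X_pow (d : ℕ) : xDeriv R (X ^ d) = (d : R⟦X⟧) * X ^ d := by
  ext n
  rw [coeff_xDeriv, ← map_natCast (C (R := R)), coeff_C_mul, coeff_X_pow]
  split_ifs with h <;> simp [h]

noncomputable def geomSeries (d : ℕ) : R⟦X⟧ := mk fun k => if d ∣ k then 1 else 0

lemma coeff_geomSeries (d k : ℕ) : coeff k (geomSeries d : R⟦X⟧) = if d ∣ k then 1 else 0 :=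
  coeff_mk _ _

@[simp]
lemma constantCoeff_geomSeries (d : ℕ) : constantCoeff (geomSeries d : R⟦X⟧) = 1 := by
  simp [← coeff_zero_eq_constantCoeff_apply, coeff_geomSeries]

lemma geomSeries_mul_one_sub {d : ℕ} (hd : d ≠ 0) : geomSeries d * (1 - X ^ d : R⟦X⟧) = 1 := by
  have h : geomSeries d = expand d hd (mk 1 : R⟦X⟧) := by
    ext k
    rw [coeff_geomSeries, coeff_expand]
    simp
  simpa [h] using congrArg (expand d hd) (mk_one_mul_one_sub_eq_one R)

lemma hasLogDeriv_one_sub_X_pow {d : ℕ} (hd : d ≠ 0) :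
    HasLogDeriv (xDeriv R) (1 - X ^ d) (-((d : R⟦X⟧) * (geomSeries d - 1))) := by
  rw [HasLogDeriv, map_sub, Derivation.map_one_eq_zero, xDeriv_X_pow]
  linear_combination (d : R⟦X⟧) * geomSeries_mul_one_sub (R := R) hd

lemma hasLogDeriv_geomSeries {d : ℕ} (hd : d ≠ 0) :
    HasLogDeriv (xDeriv R) (geomSeries d) ((d : R⟦X⟧) * (geomSeries d - 1)) := by
  simpa using (hasLogDeriv_one_sub_X_pow (R := R) hd).of_mul_eq_one (g := geomSeries d)
    ((mul_comm _ _).trans (geomSeries_mul_one_sub hd))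

/-- `(1 - X ^ d) ^ (-e)`, the `e`-th power of `geomSeries d` for an integer `e`. -/
noncomputable def geomSeriesZPow (d : ℕ) (e : ℤ) : R⟦X⟧ :=
  geomSeries d ^ e.toNat * (1 - X ^ d) ^ (-e).toNat

lemma hasLogDeriv_geomSeriesZPow {d : ℕ} (hd : d ≠ 0) (e : ℤ) :
    HasLogDeriv (xDeriv R) (geomSeriesZPow d e) ((e * d) • (geomSeries d - 1)) := by
  unfold geomSeriesZPow
  convert ((hasLogDeriv_geomSeries hd).pow e.toNat).mul
    ((hasLogDeriv_one_sub_X_pow hd).pow (-e).toNat) using 1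
  have he := congrArg (Int.cast : ℤ → R⟦X⟧) (Int.toNat_sub_toNat_neg e)
  push_cast at he
  rw [zsmul_eq_mul]
  push_cast
  rw [← he]
  ring

lemma constantCoeff_geomSeriesZPow {d : ℕ} (hd : d ≠ 0) (e : ℤ) :
    constantCoeff (geomSeriesZPow d e : R⟦X⟧) = 1 := by
  simp [geomSeriesZPow, hd]

end GeomSeries

section GaussCongruence

open scoped ArithmeticFunction.Moebius

def HasGaussCongruences (c : ℕ → ℤ) : Prop :=
  ∀ p m : ℕ, p.Prime → c (p * m) ≡ c m [ZMOD p ^ (p * m).factorization p]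

lemma sum_divisors_moebius_mul_eq_sum_filter {R : Type*} [CommRing R] (f : ℕ → R) {p n : ℕ}
    (hp : p.Prime) (hpn : p ∣ n) :
    ∑ e ∈ n.divisors, (μ e : R) * f e =
      ∑ e ∈ n.divisors with ¬ p ∣ e, (μ e : R) * (f e - f (p * e)) := by
  rw [← sum_filter_not_add_sum_filter n.divisors (p ∣ ·)]
  have hsub : (n.divisors.filter (¬ p ∣ ·)).image (p * ·) ⊆ n.divisors.filter (p ∣ ·) := by
    simp only [subset_iff, mem_image, mem_filter, Nat.mem_divisors]
    rintro _ ⟨e, ⟨⟨he, hn⟩, hpe⟩, rfl⟩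
    exact ⟨⟨Nat.Coprime.mul_dvd_of_dvd_of_dvd ((hp.coprime_iff_not_dvd).2 hpe) hpn he, hn⟩,
      dvd_mul_right p e⟩
  -- a divisor divisible by `p` but not of the form `p * e` with `p ∤ e` is divisible by `p ^ 2`
  have hzero : ∀ e ∈ n.divisors.filter (p ∣ ·),
      e ∉ (n.divisors.filter (¬ p ∣ ·)).image (p * ·) → (μ e : R) * f e = 0 := by
    simp only [mem_image, mem_filter, Nat.mem_divisors, not_exists, not_and]
    rintro _ ⟨⟨he, hn⟩, e, rfl⟩ hne
    have hpe : p ∣ e := by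
      by_contra hpe
      exact hne e ⟨⟨(dvd_mul_left e p).trans he, hn⟩, hpe⟩ rfl
    have : ¬ Squarefree (p * e) := fun h =>
      hp.one_lt.ne' (Nat.isUnit_iff.mp (h p (mul_dvd_mul_left p hpe)))
    simp [ArithmeticFunction.moebius_eq_zero_of_not_squarefree this]
  have hmu : ∀ e ∈ n.divisors.filter (¬ p ∣ ·), μ (p * e) = -μ e := by
    intro e he
    rw [ArithmeticFunction.isMultiplicative_moebius.map_mul_of_coprime
      ((hp.coprime_iff_not_dvd).2 (mem_filter.mp he).2),
      ArithmeticFunction.moebius_apply_prime hp, neg_one_mul]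
  rw [← sum_subset hsub hzero,
    sum_image fun a _ b _ h => Nat.eq_of_mul_eq_mul_left hp.pos h,
    ← sum_add_distrib]
  refine sum_congr rfl fun e he => ?_
  rw [hmu e he]
  push_cast
  ring

lemma natCast_dvd_sum_moebius_mul {c : ℕ → ℤ} (hc : HasGaussCongruences c) (n : ℕ) :
    (n : ℤ) ∣ ∑ x ∈ n.divisorsAntidiagonal, μ x.1 * c x.2 := by
  rcases eq_or_ne n 0 with rfl | hn
  · simp
  rw [Int.natCast_dvd, Nat.dvd_iff_prime_pow_dvd_dvd]
  intro p k hp hpk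
  rcases Nat.eq_zero_or_pos k with rfl | hk
  · simp
  have hpn : p ∣ n := (dvd_pow_self p hk.ne').trans hpk
  refine Int.natCast_dvd.mp ?_
  push_cast
  refine (pow_dvd_pow _ ((hp.pow_dvd_iff_le_factorization hn).mp hpk)).trans ?_
  have hsplit := sum_divisors_moebius_mul_eq_sum_filter (fun e => c (n / e)) hp hpn
  simp only [Int.cast_id] at hsplit
  rw [Nat.sum_divisorsAntidiagonal (fun a b => μ a * c b), hsplit]
  refine dvd_sum fun e he => Dvd.dvd.mul_left ?_ _
  obtain ⟨he, hpe⟩ := mem_filter.mp he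
  replace he := Nat.dvd_of_mem_divisors he
  obtain ⟨m, hm⟩ : p ∣ n / e :=
    (hp.dvd_mul.mp (by rwa [Nat.mul_div_cancel' he])).resolve_left hpe
  have hdiv : n / (p * e) = m := by
    rw [mul_comm, ← Nat.div_div_eq_div_mul, hm, Nat.mul_div_cancel_left _ hp.pos]
  have hval : (p * m).factorization p = n.factorization p := by
    rw [← hm, Nat.factorization_div he]
    simp [Nat.factorization_eq_zero_of_not_dvd hpe]
  rw [hdiv, hm, ← hval]
  exact (hc p m hp).symm.dvd

lemma exists_sum_divisors_mul_eq {c : ℕ → ℤ} (hc : HasGaussCongruences c) :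
    ∃ β : ℕ → ℤ, ∀ m : ℕ, 0 < m → ∑ d ∈ m.divisors, (d : ℤ) * β d = c m := by
  set N : ℕ → ℤ := fun n => ∑ x ∈ n.divisorsAntidiagonal, μ x.1 * c x.2
  refine ⟨fun d => N d / d, fun m hm => ?_⟩
  rw [← (ArithmeticFunction.sum_eq_iff_sum_mul_moebius_eq (f := N) (g := c)).mpr
    (by simp [N]) m hm]
  exact sum_congr rfl fun d _ => Int.mul_ediv_cancel' (natCast_dvd_sum_moebius_mul hc d)

end GaussCongruence

section Integrality

lemma coeff_sum_zsmul_geomSeries_sub_one {R : Type*} [CommRing R] (a : ℕ → ℤ) {n k : ℕ}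
    (hk : 0 < k) (hkn : k ≤ n) :
    coeff k (∑ d ∈ Icc 1 n, a d • (geomSeries d - 1 : R⟦X⟧)) =
      ∑ d ∈ k.divisors, (a d : R) := by
  have hterm : ∀ d, coeff k (a d • (geomSeries d - 1 : R⟦X⟧)) = if d ∣ k then (a d : R) else 0 := by
    intro d
    rw [map_zsmul, map_sub, coeff_geomSeries, coeff_one, if_neg hk.ne', sub_zero, zsmul_eq_mul]
    split_ifs <;> simp
  rw [map_sum, sum_congr rfl fun d _ => hterm d, ← sum_filter]
  congr 1
  ext d
  simp only [mem_filter, mem_Icc, Nat.mem_divisors]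
  exact ⟨fun h => ⟨h.2, hk.ne'⟩, fun h =>
    ⟨⟨Nat.pos_of_dvd_of_pos h.1 hk, (Nat.le_of_dvd hk h.1).trans hkn⟩, h.1⟩⟩

lemma succ_mul_coeff_succ_of_hasLogDeriv {R : Type*} [CommRing R] {Q r : R⟦X⟧}
    (hQ : HasLogDeriv (xDeriv R) Q r) (hr : coeff 0 r = 0) (m : ℕ) :
    (m + 1 : R) * coeff (m + 1) Q = ∑ k ∈ range (m + 1), coeff (k + 1) r * coeff (m - k) Q := by
  have h := congrArg (coeff (m + 1)) hQ
  rw [coeff_xDeriv, coeff_mul,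
    Finset.Nat.sum_antidiagonal_eq_sum_range_succ (fun i j => coeff i r * coeff j Q),
    sum_range_succ', hr, zero_mul, add_zero] at h
  push_cast at h
  simpa using h

lemma eq_of_succ_mul_eq_sum {K : Type*} [Field K] [CharZero K] {a b c : ℕ → K} {N : ℕ}
    (h0 : a 0 = b 0)
    (ha : ∀ n < N, (n + 1 : K) * a (n + 1) = ∑ k ∈ range (n + 1), c (k + 1) * a (n - k))
    (hb : ∀ n < N, (n + 1 : K) * b (n + 1) = ∑ k ∈ range (n + 1), c (k + 1) * b (n - k)) :
    ∀ m ≤ N, a m = b m := by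
  intro m
  induction m using Nat.strong_induction_on with
  | _ m ih =>
    intro hm
    cases m with
    | zero => exact h0
    | succ n =>
      refine mul_left_cancel₀ (by exact_mod_cast n.succ_ne_zero : (n + 1 : K) ≠ 0) ?_
      rw [ha n (by omega), hb n (by omega)]
      exact sum_congr rfl fun k _ => by rw [ih (n - k) (by omega) (by omega)]

theorem exists_eq_intCast_of_hasGaussCongruences {c : ℕ → ℤ} (hc : HasGaussCongruences c)
    {lam : ℕ → ℚ} (h0 : lam 0 = 1)
    (hrec : ∀ n : ℕ, (n + 1 : ℚ) * lam (n + 1) =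
      ∑ k ∈ range (n + 1), (c (k + 1) : ℚ) * lam (n - k))
    (n : ℕ) : ∃ z : ℤ, lam n = z := by
  obtain ⟨β, hβ⟩ := exists_sum_divisors_mul_eq hc
  -- `λ` is the coefficient sequence of `∏_d (1 - X ^ d) ^ (-β d)`, read off up to order `n`
  set Q : ℤ⟦X⟧ := ∏ d ∈ Icc 1 n, geomSeriesZPow d (β d)
  set r : ℤ⟦X⟧ := ∑ d ∈ Icc 1 n, (β d * d) • (geomSeries d - 1)
  have hpos : ∀ d ∈ Icc 1 n, d ≠ 0 := fun d hd => by
    have := (mem_Icc.mp hd).1; omega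
  have hQ : HasLogDeriv (xDeriv ℤ) Q r :=
    HasLogDeriv.prod _ fun d hd => hasLogDeriv_geomSeriesZPow (hpos d hd) _
  have hQ0 : constantCoeff Q = 1 := by
    rw [map_prod]
    exact prod_eq_one fun d hd => constantCoeff_geomSeriesZPow (hpos d hd) _
  have hr0 : coeff 0 r = 0 := by simp [r]
  have hr : ∀ k, 0 < k → k ≤ n → coeff k r = c k := fun k hk hkn => by
    simp only [r]
    rw [coeff_sum_zsmul_geomSeries_sub_one _ hk hkn, ← hβ k hk]
    exact sum_congr rfl fun d _ => by rw [Int.cast_id, mul_comm]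
  refine ⟨coeff n Q, eq_of_succ_mul_eq_sum (b := fun m => ((coeff m Q : ℤ) : ℚ))
    (c := fun k => (c k : ℚ)) (by simp [h0]; exact_mod_cast hQ0.symm) (fun m _ => hrec m)
    (fun m hm => ?_) n le_rfl⟩
  have h := succ_mul_coeff_succ_of_hasLogDeriv hQ hr0 m
  rw [sum_congr rfl fun k hk => by
    rw [hr (k + 1) k.succ_pos (by have := mem_range.mp hk; omega)]] at h
  exact_mod_cast h

end Integrality

section EulerNumbers

@[simp]
lemma constantCoeff_coshSeries : constantCoeff coshSeries = 1 := by
  simp [coshSeries, ← coeff_zero_eq_constantCoeff_apply]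

lemma rescale_exp_add_rescale_exp_neg :
    rescale 1 (exp ℚ) + rescale (-1) (exp ℚ) = 2 * coshSeries := by
  ext n
  rw [map_add, coeff_rescale, coeff_rescale, coeff_exp, show (2 : ℚ⟦X⟧) = C 2 from rfl,
    coeff_C_mul, coshSeries, coeff_mk]
  rcases Nat.even_or_odd n with h | h
  · simp [h.neg_one_pow, h]
    ring
  · simp [h.neg_one_pow, Nat.not_even_iff_odd.mpr h]

lemma sum_rescale_exp_mul_two_mul_coshSeries (q : ℕ) :
    (∑ j ∈ range q, (-1 : ℚ⟦X⟧) ^ j * rescale (2 * j + 1 : ℚ) (exp ℚ)) *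
      (2 * coshSeries) = 1 - (-1) ^ q * rescale (2 * q : ℚ) (exp ℚ) := by
  rw [← rescale_exp_add_rescale_exp_neg]
  induction q with
  | zero => simp
  | succ q ih =>
    rw [sum_range_succ, add_mul, ih, mul_assoc, mul_add, exp_mul_exp_eq_exp_add,
      exp_mul_exp_eq_exp_add]
    push_cast
    ring_nf

lemma factorial_mul_coeff_rescale_exp_mul (a : ℚ) (f : ℚ⟦X⟧) (n : ℕ) :
    n ! * coeff n (rescale a (exp ℚ) * f) =
      ∑ k ∈ range (n + 1), n.choose k * a ^ k * ((n - k)! * coeff (n - k) f) := by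
  rw [coeff_mul,
    Nat.sum_antidiagonal_eq_sum_range_succ (fun i j => coeff i (rescale a (exp ℚ)) * coeff j f),
    mul_sum]
  refine sum_congr rfl fun k hk => ?_
  have hkn : k ≤ n := Nat.lt_succ_iff.mp (mem_range.mp hk)
  rw [coeff_rescale, coeff_exp, ← Nat.choose_mul_factorial_mul_factorial hkn]
  simp only [map_div₀, map_one, Algebra.algebraMap_self, RingHom.id_apply]
  push_cast
  field_simp

lemma two_mul_sum_rescale_exp {q : ℕ} (hq : Odd q) :
    2 * ∑ j ∈ range q, (-1 : ℚ⟦X⟧) ^ j * rescale (2 * j + 1 : ℚ) (exp ℚ) =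
      coshSeries⁻¹ + rescale (2 * q : ℚ) (exp ℚ) * coshSeries⁻¹ := by
  have hcosh : coshSeries * coshSeries⁻¹ = 1 := PowerSeries.mul_inv_cancel _ (by simp)
  have h := congrArg (· * coshSeries⁻¹) (sum_rescale_exp_mul_two_mul_coshSeries q)
  simp only [hq.neg_one_pow] at h
  linear_combination h - 2 * hcosh *
    ∑ j ∈ range q, (-1 : ℚ⟦X⟧) ^ j * rescale (2 * j + 1 : ℚ) (exp ℚ)

lemma eulerNumber_eq_sum_sub {q : ℕ} (hq : Odd q) (n : ℕ) :
    eulerNumber n = ∑ j ∈ range q, (-1) ^ j * (2 * j + 1 : ℚ) ^ n -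
      q * ∑ k ∈ range n, n.choose (k + 1) * (2 * q : ℚ) ^ k * eulerNumber (n - (k + 1)) := by
  have hn := congrArg (fun f => (n ! : ℚ) * coeff n f) (two_mul_sum_rescale_exp hq)
  have hsign : ∀ j : ℕ, (-1 : ℚ⟦X⟧) ^ j = C ((-1) ^ j) := by simp
  simp only [map_add, mul_add, factorial_mul_coeff_rescale_exp_mul, hsign,
    show (2 : ℚ⟦X⟧) = C 2 from rfl, coeff_C_mul, map_sum, coeff_rescale, coeff_exp] at hn
  rw [sum_range_succ'] at hn
  simp only [Algebra.algebraMap_self, RingHom.id_apply, Nat.sub_zero, Nat.choose_zero_right,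
    pow_zero, Nat.cast_one, one_mul] at hn
  have hS : (n ! : ℚ) * (2 * ∑ j ∈ range q, (-1) ^ j * ((2 * j + 1 : ℚ) ^ n * (1 / n !))) =
      2 * ∑ j ∈ range q, (-1) ^ j * (2 * j + 1 : ℚ) ^ n := by
    rw [mul_left_comm, mul_sum]
    congr 1
    exact sum_congr rfl fun j _ => by field_simp
  have hE : ∑ k ∈ range n, (n.choose (k + 1) : ℚ) * (2 * q) ^ (k + 1) *
      ((n - (k + 1))! * coeff (n - (k + 1)) coshSeries⁻¹) =
      2 * q * ∑ k ∈ range n, n.choose (k + 1) * (2 * q : ℚ) ^ k * eulerNumber (n - (k + 1)) := by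
    rw [mul_sum]
    exact sum_congr rfl fun k _ => by rw [eulerNumber]; ring
  rw [hS, hE] at hn
  rw [eulerNumber]
  linear_combination -hn / 2

lemma exists_eulerNumber_eq_intCast (n : ℕ) : ∃ z : ℤ, eulerNumber n = z := by
  induction n using Nat.strong_induction_on with
  | _ n ih =>
    choose! z hz using ih
    refine ⟨1 - ∑ k ∈ range n, n.choose (k + 1) * 2 ^ k * z (n - (k + 1)), ?_⟩
    rw [eulerNumber_eq_sum_sub odd_one n]
    push_cast
    simp only [range_one, sum_singleton, pow_zero, CharP.cast_eq_zero, mul_zero, zero_add,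
      one_pow, mul_one, one_mul]
    congr 1
    exact sum_congr rfl fun k hk => by rw [hz _ (by have := mem_range.mp hk; omega)]

noncomputable def eulerInt (n : ℕ) : ℤ := (eulerNumber n).num

@[simp, norm_cast]
lemma cast_eulerInt (n : ℕ) : (eulerInt n : ℚ) = eulerNumber n := by
  obtain ⟨z, hz⟩ := exists_eulerNumber_eq_intCast n
  rw [eulerInt, hz, Rat.num_intCast]

lemma eulerInt_modEq_sum {q : ℕ} (hq : Odd q) (n : ℕ) :
    eulerInt n ≡ ∑ j ∈ range q, (-1 : ℤ) ^ j * (2 * j + 1) ^ n [ZMOD q] := by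
  have h : eulerInt n = ∑ j ∈ range q, (-1 : ℤ) ^ j * (2 * j + 1) ^ n -
      q * ∑ k ∈ range n, n.choose (k + 1) * (2 * q) ^ k * eulerInt (n - (k + 1)) := by
    rw [← Int.cast_inj (α := ℚ)]
    push_cast
    exact eulerNumber_eq_sum_sub hq n
  rw [Int.modEq_iff_dvd, h, sub_sub_cancel]
  exact dvd_mul_right _ _

lemma pow_modEq_pow_of_totient_dvd (x : ℕ) {p a n n' : ℕ} (hp : p.Prime) (ha : a ≤ n)
    (hnn' : n ≤ n') (h : φ (p ^ a) ∣ n' - n) : x ^ n' ≡ x ^ n [MOD p ^ a] := by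
  obtain ⟨t, ht⟩ := h
  by_cases hpx : p ∣ x
  · have hx : ∀ m, a ≤ m → x ^ m ≡ 0 [MOD p ^ a] := fun m hm =>
      Nat.modEq_zero_iff_dvd.mpr ((pow_dvd_pow p hm).trans (pow_dvd_pow_of_dvd hpx m))
    exact (hx n' (ha.trans hnn')).trans (hx n ha).symm
  · have hcop : x.Coprime (p ^ a) :=
      Nat.Coprime.pow_right a ((hp.coprime_iff_not_dvd).2 hpx).symm
    calc x ^ n' = x ^ n * (x ^ φ (p ^ a)) ^ t := by rw [← pow_mul, ← ht, ← pow_add]; congr 1; omega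
      _ ≡ x ^ n * 1 ^ t [MOD p ^ a] := ((Nat.ModEq.pow_totient hcop).pow t).mul_left _
      _ = x ^ n := by rw [one_pow, mul_one]

lemma eulerInt_modEq_of_totient_dvd {p a n n' : ℕ} (hp : p.Prime) (hp2 : p ≠ 2) (ha : a ≤ n)
    (hnn' : n ≤ n') (h : φ (p ^ a) ∣ n' - n) : eulerInt n' ≡ eulerInt n [ZMOD p ^ a] := by
  have hS := eulerInt_modEq_sum ((hp.odd_of_ne_two hp2).pow (n := a))
  push_cast at hS
  refine (hS n').trans (Int.ModEq.trans ?_ (hS n).symm)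
  refine Int.ModEq.sum fun j _ => Int.ModEq.mul_left _ ?_
  exact_mod_cast Int.natCast_modEq_iff.mpr (pow_modEq_pow_of_totient_dvd (2 * j + 1) hp ha hnn' h)

end EulerNumbers

section Sign

lemma sum_range_succ_alternating {α : Type*} [Ring α] (t : ℕ → α) (K : ℕ) :
    ∑ j ∈ range (K + 1), (-1) ^ j * t j = t 0 - ∑ j ∈ range K, (-1) ^ j * t (j + 1) := by
  rw [sum_range_succ', sub_eq_add_neg, add_comm, ← sum_neg_distrib]
  simp [pow_succ]

lemma alternating_sum_nonneg_and_le {α : Type*} [Ring α] [PartialOrder α] [IsOrderedRing α]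
    (K : ℕ) {t : ℕ → α} (h0 : ∀ j ≤ K, 0 ≤ t j) (ht : ∀ j < K, t (j + 1) ≤ t j) :
    0 ≤ ∑ j ∈ range (K + 1), (-1) ^ j * t j ∧ ∑ j ∈ range (K + 1), (-1) ^ j * t j ≤ t 0 := by
  induction K generalizing t with
  | zero => simpa using h0 0 le_rfl
  | succ K ih =>
    obtain ⟨hlo, hhi⟩ := ih (t := fun j => t (j + 1)) (fun j hj => h0 _ (by omega))
      (fun j hj => ht _ (by omega))
    rw [sum_range_succ_alternating]
    exact ⟨sub_nonneg.mpr (hhi.trans (ht 0 (by omega))), sub_le_self _ hlo⟩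

/-- `cos √x`; its inverse `sec √x` has the positive coefficients `|E₂ₙ| / (2n)!`. -/
noncomputable def cosSqrtSeries : ℚ⟦X⟧ := mk fun n => (-1) ^ n / (2 * n)!

lemma coeff_cosSqrtSeries (n : ℕ) : coeff n cosSqrtSeries = (-1) ^ n / (2 * n)! := coeff_mk _ _

@[simp]
lemma constantCoeff_cosSqrtSeries : constantCoeff cosSqrtSeries = 1 := by
  simp [cosSqrtSeries, ← coeff_zero_eq_constantCoeff_apply]

lemma expand_rescale_cosSqrtSeries :
    expand 2 two_ne_zero (rescale (-1) cosSqrtSeries) = coshSeries := by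
  ext n
  rw [coeff_expand, coshSeries, coeff_mk]
  by_cases h : Even n
  · obtain ⟨m, rfl⟩ := h
    rw [if_pos (even_iff_two_dvd.mp ⟨m, rfl⟩), if_pos ⟨m, rfl⟩, coeff_rescale, coeff_cosSqrtSeries,
      ← two_mul, Nat.mul_div_cancel_left _ two_pos, ← mul_div_assoc, ← mul_pow]
    simp
  · rw [if_neg (mt even_iff_two_dvd.mpr h), if_neg h]

lemma eulerNumber_two_mul (n : ℕ) :
    eulerNumber (2 * n) = (-1) ^ n * (2 * n)! * coeff n cosSqrtSeries⁻¹ := by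
  have hinv : expand 2 two_ne_zero (rescale (-1) cosSqrtSeries⁻¹) = coshSeries⁻¹ := by
    rw [PowerSeries.eq_inv_iff_mul_eq_one (by simp), ← expand_rescale_cosSqrtSeries, ← map_mul,
      ← map_mul, PowerSeries.inv_mul_cancel _ (by simp [constantCoeff_cosSqrtSeries]), map_one,
      map_one]
  rw [eulerNumber, ← hinv, coeff_expand_mul, coeff_rescale]
  ring

lemma coeff_succ_inv_cosSqrtSeries (n : ℕ) :
    coeff (n + 1) cosSqrtSeries⁻¹ =
      ∑ j ∈ range (n + 1), (-1) ^ j * (coeff (n - j) cosSqrtSeries⁻¹ / (2 * j + 2)!) := by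
  have h := congrArg (coeff (n + 1))
    (PowerSeries.mul_inv_cancel cosSqrtSeries (by simp [constantCoeff_cosSqrtSeries]))
  rw [coeff_mul, Nat.sum_antidiagonal_eq_sum_range_succ
    (fun i j => coeff i cosSqrtSeries * coeff j cosSqrtSeries⁻¹), sum_range_succ'] at h
  have hsum : ∑ j ∈ range (n + 1),
      coeff (j + 1) cosSqrtSeries * coeff (n + 1 - (j + 1)) cosSqrtSeries⁻¹ =
      -∑ j ∈ range (n + 1), (-1) ^ j * (coeff (n - j) cosSqrtSeries⁻¹ / (2 * j + 2)!) := by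
    rw [← sum_neg_distrib]
    refine sum_congr rfl fun j _ => ?_
    rw [coeff_cosSqrtSeries, Nat.add_sub_add_right, show 2 * (j + 1) = 2 * j + 2 by ring, pow_succ]
    ring
  rw [hsum, coeff_one, if_neg n.add_one_ne_zero, Nat.sub_zero, coeff_cosSqrtSeries] at h
  simp only [pow_zero, mul_zero, Nat.factorial_zero, Nat.cast_one, div_one, one_mul] at h
  linear_combination h

lemma three_mul_factorial_le (j : ℕ) : 3 * (2 * j + 2)! ≤ (2 * j + 4)! := by
  rw [show 2 * j + 4 = 2 * j + 2 + 1 + 1 by ring, Nat.factorial_succ (2 * j + 2 + 1),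
    Nat.factorial_succ (2 * j + 2), ← mul_assoc]
  exact Nat.mul_le_mul_right _ (by nlinarith)

lemma coeff_inv_cosSqrtSeries_pos_and_le (n : ℕ) :
    0 < coeff n cosSqrtSeries⁻¹ ∧ coeff n cosSqrtSeries⁻¹ ≤ 3 * coeff (n + 1) cosSqrtSeries⁻¹ := by
  induction n using Nat.strong_induction_on with
  | _ n ih =>
  set s : ℕ → ℚ := fun n => coeff n cosSqrtSeries⁻¹
  have hpos : 0 < s n := by
    cases n with
    | zero => simp [s, constantCoeff_cosSqrtSeries]
    | succ k => have := ih k (by omega); simp only [s]; linarith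
  refine ⟨hpos, ?_⟩
  rw [coeff_succ_inv_cosSqrtSeries]
  cases n with
  | zero => norm_num
  | succ k =>
    -- the terms of the alternating sum decrease since `s` at most triples per step
    set t : ℕ → ℚ := fun j => s (k + 1 - j) / (2 * j + 2)!
    have hnonneg : ∀ j ≤ k, 0 ≤ t (j + 1) := fun j _ => by
      simp only [t, show k + 1 - (j + 1) = k - j by omega]
      exact div_nonneg (ih (k - j) (by omega)).1.le (Nat.cast_nonneg _)
    have hanti : ∀ j < k, t (j + 1 + 1) ≤ t (j + 1) := fun j hj => by
      have hle := (ih (k - (j + 1)) (by omega)).2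
      rw [show k - (j + 1) + 1 = k + 1 - (j + 1) by omega] at hle
      have hfac : (3 : ℚ) * (2 * (j + 1) + 2)! ≤ (2 * (j + 1) + 4)! :=
        mod_cast three_mul_factorial_le (j + 1)
      simp only [t, show k + 1 - (j + 1 + 1) = k - (j + 1) by omega,
        show 2 * (j + 1 + 1) + 2 = 2 * (j + 1) + 4 by ring]
      rw [div_le_div_iff₀ (by positivity) (by positivity)]
      nlinarith [(ih (k - (j + 1)) (by omega)).1, (2 * (j + 1) + 2)!.cast_nonneg (α := ℚ)]
    have hhi := (alternating_sum_nonneg_and_le k (t := fun j => t (j + 1)) hnonneg hanti).2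
    have hk := (ih k (by omega)).2
    show s (k + 1) ≤ 3 * ∑ j ∈ range (k + 1 + 1), (-1) ^ j * t j
    rw [sum_range_succ_alternating]
    simp only [t, Nat.sub_zero, show k + 1 - (0 + 1) = k by omega] at hhi ⊢
    norm_num at hhi ⊢
    linarith

end Sign

lemma abs_eulerInt_two_mul (m : ℕ) : |eulerInt (2 * m)| = (-1) ^ m * eulerInt (2 * m) := by
  have hpos : 0 < (-1 : ℤ) ^ m * eulerInt (2 * m) := by
    have h : (((-1 : ℤ) ^ m * eulerInt (2 * m) : ℤ) : ℚ) = (2 * m)! * coeff m cosSqrtSeries⁻¹ := by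
      push_cast
      rw [eulerNumber_two_mul, ← mul_assoc, ← mul_assoc, ← pow_add, ← two_mul, pow_mul]
      simp
    exact_mod_cast h ▸ mul_pos (by positivity) (coeff_inv_cosSqrtSeries_pos_and_le m).1
  rw [← abs_of_pos hpos, abs_mul, abs_pow, abs_neg, abs_one, one_pow, one_mul]

lemma two_pow_mul_eulerInt_modEq {p m v : ℕ} (hp : p.Prime) (hp2 : p ≠ 2) (hv : 0 < v)
    (hvm : v ≤ m) (hdvd : p ^ (v - 1) ∣ m) :
    2 ^ (4 * (p * m) - 3) * eulerInt (2 * (p * m)) ≡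
      2 ^ (4 * m - 3) * eulerInt (2 * m) [ZMOD p ^ v] := by
  obtain ⟨s, hs⟩ := hdvd
  have hpm : m ≤ p * m := Nat.le_mul_of_pos_left m hp.pos
  have htot : φ (p ^ v) = p ^ (v - 1) * (p - 1) := Nat.totient_prime_pow hp hv
  have h2 : (2 : ℤ) ^ (4 * (p * m) - 3) ≡ 2 ^ (4 * m - 3) [ZMOD p ^ v] := by
    refine mod_cast Int.natCast_modEq_iff.mpr (pow_modEq_pow_of_totient_dvd 2 hp (by omega)
      (by omega) ⟨4 * s, ?_⟩)
    rw [htot]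
    zify [hp.one_le, show 3 ≤ 4 * m by omega, show 3 ≤ 4 * (p * m) by omega,
      show 4 * m - 3 ≤ 4 * (p * m) - 3 by omega]
    push_cast [hs]
    ring
  have hE : eulerInt (2 * (p * m)) ≡ eulerInt (2 * m) [ZMOD p ^ v] := by
    refine eulerInt_modEq_of_totient_dvd hp hp2 (by omega) (by omega) ⟨2 * s, ?_⟩
    rw [htot]
    zify [hp.one_le, show 2 * m ≤ 2 * (p * m) by omega]
    push_cast [hs]
    ring
  exact h2.mul hE

lemma hasGaussCongruences_eulerInt :
    HasGaussCongruences fun m => 2 ^ (4 * m - 3) * |eulerInt (2 * m)| := by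
  intro p m hp
  rcases Nat.eq_zero_or_pos m with rfl | hm
  · rfl
  set v := (p * m).factorization p
  have hv : v = m.factorization p + 1 := by
    simp [v, Nat.factorization_mul hp.ne_zero hm.ne', hp.factorization_self, add_comm]
  have hvm : v ≤ m := by have := Nat.factorization_lt p hm.ne'; omega
  rcases hp.eq_two_or_odd' with rfl | hodd
  · have h2 : ∀ n, v ≤ n → (2 : ℤ) ^ v ∣ 2 ^ (4 * n - 3) * |eulerInt (2 * n)| := fun n hn =>
      Dvd.dvd.mul_right (pow_dvd_pow _ (by omega)) _
    exact (h2 _ (by omega)).modEq_zero_int.trans (h2 m hvm).zero_modEq_int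
  have hp2 : p ≠ 2 := by rintro rfl; exact (Nat.not_odd_iff_even.mpr even_two) hodd
  have hsign : (-1 : ℤ) ^ (p * m) = (-1) ^ m := by rw [pow_mul, hodd.neg_one_pow]
  simp only [abs_eulerInt_two_mul, hsign, mul_left_comm _ ((-1 : ℤ) ^ m)]
  exact (two_pow_mul_eulerInt_modEq hp hp2 (by omega) hvm
    (hv ▸ Nat.ordProj_dvd m p)).mul_left _

theorem stmt_16 (lam : ℕ → ℚ) (h0 : lam 0 = 1)
    (hrec : ∀ n : ℕ, (n + 1 : ℚ) * lam (n + 1) =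
      ∑ k ∈ Finset.range (n + 1),
        2 ^ (4 * k + 1) * |eulerNumber (2 * k + 2)| * lam (n - k)) :
    ∀ n : ℕ, ∃ m : ℤ, lam n = (m : ℚ) := by
  refine exists_eq_intCast_of_hasGaussCongruences hasGaussCongruences_eulerInt h0 fun n => ?_
  rw [hrec n]
  refine sum_congr rfl fun k _ => ?_
  simp [mul_add]
end
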